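/- arXiv:1711.06286 — 7 statements merged into one kernel-verified Lean document; each statement's English description precedes it below -/
import Mathlib

section
/- Let k be an algebraically closed field and consider the polynomial ring in 18 variables a₀,a₁,a₂, b₀,b₁,b₂, …, f₀,f₁,f₂. Let φ be the determinant of the 6×6 matrix whose column corresponding to each letter x ∈ {a,b,c,d,e,f} is (x₀², x₁², x₂², x₀x₁, x₀x₂, x₁x₂). Then φ is not the square of any polynomial, i.e., there is no polynomial p with φ = p². -/
/-!
Specialize φ along a ring map to `k[t]`: take the sixth point to be `(0, 1, t)` and the other
five to be `e₀, e₁, e₂, e₀ + e₁, e₀ + e₂`. In this order the matrix of Veronese images is upper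
triangular with diagonal `(1, 1, 1, 1, 1, t)`, so φ specializes to `t`, which has odd degree and
hence is not a square.
-/

/-- The Veronese image of a vector `v = (v₀, v₁, v₂)`:
`ver v = (v₀², v₁², v₂², v₀v₁, v₀v₂, v₁v₂)`. -/
def ver {k : Type*} [CommRing k] (v : Fin 3 → k) : Fin 6 → k :=
  ![v 0 * v 0, v 1 * v 1, v 2 * v 2, v 0 * v 1, v 0 * v 2, v 1 * v 2]

open Matrix Polynomial

/-- The determinant of the Veronese images of six points of the plane; it vanishes exactly when
the points lie on a conic. -/
def conicDet {R : Type*} [CommRing R] (P : Fin 6 → Fin 3 → R) : R :=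
  det (of fun r c => ver (P c) r)

theorem map_ver {R S : Type*} [CommRing R] [CommRing S] (f : R →+* S) (v : Fin 3 → R)
    (r : Fin 6) : f (ver v r) = ver (fun j => f (v j)) r := by
  fin_cases r <;> simp [ver]

theorem map_conicDet {R S : Type*} [CommRing R] [CommRing S] (f : R →+* S)
    (P : Fin 6 → Fin 3 → R) : f (conicDet P) = conicDet fun c j => f (P c j) := by
  rw [conicDet, RingHom.map_det]
  congr 1
  ext r c
  exact map_ver f (P c) r

def triangularConfig {R : Type*} [CommRing R] (t : R) : Fin 6 → Fin 3 → R :=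
  ![![1, 0, 0], ![0, 1, 0], ![0, 0, 1], ![1, 1, 0], ![1, 0, 1], ![0, 1, t]]

theorem conicDet_triangularConfig {R : Type*} [CommRing R] (t : R) :
    conicDet (triangularConfig t) = t := by
  have hupper : (of fun r c => ver (triangularConfig t c) r).IsUpperTriangular := by
    intro r c hcr
    fin_cases r <;> fin_cases c <;> simp_all [ver, triangularConfig]
  rw [conicDet, det_of_isUpperTriangular hupper]
  simp [Fin.prod_univ_succ, ver, triangularConfig]

theorem Polynomial.ne_sq_of_odd_natDegree {R : Type*} [Semiring R] [NoZeroDivisors R]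
    {p : R[X]} (hp : Odd p.natDegree) (q : R[X]) : p ≠ q ^ 2 := by
  rintro rfl
  rw [natDegree_pow] at hp
  exact Nat.not_odd_iff_even.mpr (even_two_mul _) hp

theorem phi_not_square_general {k : Type*} [Field k] :
    ¬ ∃ p : MvPolynomial (Fin 6 × Fin 3) k,
      Matrix.det (Matrix.of fun r c =>
        ver (fun j => MvPolynomial.X (c, j)) r) = p ^ 2 := by
  rintro ⟨p, hp⟩
  let specialize : MvPolynomial (Fin 6 × Fin 3) k →+* k[X] :=
    MvPolynomial.eval₂Hom C fun cj => triangularConfig X cj.1 cj.2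
  have hX : specialize (conicDet fun c j => MvPolynomial.X (c, j)) = X := by
    rw [map_conicDet]
    simpa [specialize] using conicDet_triangularConfig (X : k[X])
  refine ne_sq_of_odd_natDegree (p := X) (by simp) (specialize p) ?_
  rw [← hX, ← map_pow]
  exact congrArg specialize hp

/-- In the polynomial ring over `k` in the 18 variables `x_{c,j}` (`c ∈ {a,…,f}`,
`j ∈ {0,1,2}`), the determinant `φ` of the 6×6 matrix whose column indexed by `c` is
`(x_{c,0}², x_{c,1}², x_{c,2}², x_{c,0}x_{c,1}, x_{c,0}x_{c,2}, x_{c,1}x_{c,2})`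
is not the square of any polynomial. -/
theorem phi_not_square {k : Type*} [Field k] [IsAlgClosed k] :
    ¬ ∃ p : MvPolynomial (Fin 6 × Fin 3) k,
      Matrix.det (Matrix.of fun r c =>
        ver (fun j => MvPolynomial.X (c, j)) r) = p ^ 2 :=
  phi_not_square_general
end

section
/- Let k be an algebraically closed field and let 1 ≤ d + 1 ≤ n. Let 𝒯 be a collection of (d+1)-element subsets of [n]. Then the following are equivalent: (i) for every (d+1)×n matrix A over k all of whose columns are nonzero, if the maximal minor m_H(A) vanishes for every H ∈ 𝒯, then rank A ≤ d; (ii) 𝒯 satisfies the transversality property. -/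
/-!
Order a basis of `k^{d+1}` chosen among the columns of `A` and send each nonzero column to its
level in the resulting complete flag `0 = F₀ < F₁ < ⋯ < F_{d+1}`: the least `j` with the column in
`F_{j+1}`. Every level occurs, so this is a partition of `[n]` into `d + 1` parts, and a
transversal `H` of it picks columns of pairwise distinct levels, which are linearly independent;
hence `m_H(A) ≠ 0` when `rank A = d + 1`. Conversely, if the parts of a partition `P` admit no
transversal in `𝒯`, the matrix whose `i`-th column is `e_{P i}` has full rank while every `H ∈ 𝒯`
contains two equal columns, so all of its minors `m_H` vanish.
-/

/-- A collection `𝒯` of subsets of `[n]` satisfies the transversality property (for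
`k`-uniform hypergraphs) if for every partition of `[n]` into `k` nonempty parts
(encoded as a surjection `P : Fin n → Fin k`, the parts being the fibers), there is
an `H ∈ 𝒯` meeting every part in exactly one element. -/
def Transversal (n k : ℕ) (𝒯 : Set (Finset (Fin n))) : Prop :=
  ∀ P : Fin n → Fin k, Function.Surjective P →
    ∃ H ∈ 𝒯, ∀ j : Fin k, (H.filter fun i => P i = j).card = 1

open Function Set Submodule Module

theorem Fin.exists_not_castSucc_and_succ {m : ℕ} {p : Fin (m + 1) → Prop} (h0 : ¬p 0)
    (hlast : p (Fin.last m)) : ∃ j : Fin m, ¬p j.castSucc ∧ p j.succ := by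
  classical
  have hex : ∃ i, p i := ⟨_, hlast⟩
  obtain ⟨j, hj⟩ := Fin.exists_succ_eq_of_ne_zero fun h => h0 (h ▸ Fin.find_spec hex)
  exact ⟨j, Fin.find_min hex (hj ▸ Fin.castSucc_lt_succ), hj ▸ Fin.find_spec hex⟩

theorem Function.bijective_iff_card_filter_eq_one {α β : Type*} [Fintype α] [DecidableEq β]
    {f : α → β} : Bijective f ↔ ∀ b, (Finset.univ.filter fun a => f a = b).card = 1 := by
  simp only [bijective_iff_existsUnique, Finset.card_eq_one_iff_existsUnique, Finset.mem_filter,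
    Finset.mem_univ, true_and]

theorem Finset.card_filter_eq_one_iff_injective {α : Type*} [LinearOrder α] {m : ℕ}
    {H : Finset α} (h : H.card = m) (P : α → Fin m) :
    (∀ j, (H.filter fun i => P i = j).card = 1) ↔ Injective (P ∘ H.orderEmbOfFin h) := by
  have hfilter : ∀ j, H.filter (fun i => P i = j) =
      (univ.filter fun l => P (H.orderEmbOfFin h l) = j).map (H.orderEmbOfFin h).toEmbedding := by
    intro j
    conv_lhs => rw [← H.map_orderEmbOfFin_univ h]
    rw [filter_map]
    rfl
  simp only [hfilter, card_map, Finite.injective_iff_bijective, bijective_iff_card_filter_eq_one]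
  rfl

section Flag

variable {K V : Type*} [DivisionRing K] [AddCommGroup V] [Module K V] {m : ℕ}
  {F : Fin (m + 1) → Submodule K V}

theorem eq_of_notMem_castSucc_of_mem_succ (hF : Monotone F) {v : V} {a c : Fin m}
    (ha : v ∉ F a.castSucc) (ha' : v ∈ F a.succ) (hc : v ∉ F c.castSucc) (hc' : v ∈ F c.succ) :
    a = c := by
  rcases lt_trichotomy a c with h | h | h
  · exact absurd (hF (Fin.succ_le_castSucc_iff.2 h) ha') hc
  · exact h
  · exact absurd (hF (Fin.succ_le_castSucc_iff.2 h) hc') ha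

theorem linearIndependent_of_injective_level (hF : Monotone F) {ι : Type*} {v : ι → V}
    {level : ι → Fin m} (hlevel : Injective level) (hnot : ∀ i, v i ∉ F (level i).castSucc)
    (hmem : ∀ i, v i ∈ F (level i).succ) : LinearIndependent K v := by
  classical
  rw [linearIndependent_iff']
  intro s g hg i hi
  by_contra hgi
  obtain ⟨t, ht, htop⟩ := (s.filter (g · ≠ 0)).exists_max_image level
    ⟨i, Finset.mem_filter.2 ⟨hi, hgi⟩⟩
  rw [Finset.mem_filter] at ht
  have hrest : ∑ j ∈ s.erase t, g j • v j ∈ F (level t).castSucc := by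
    refine sum_mem fun j hj => ?_
    obtain ⟨hjt, hjs⟩ := Finset.mem_erase.1 hj
    by_cases hgj : g j = 0
    · simp [hgj]
    · have hlt : level j < level t :=
        (htop j (Finset.mem_filter.2 ⟨hjs, hgj⟩)).lt_of_ne (hlevel.ne hjt)
      exact smul_mem _ _ (hF (Fin.succ_le_castSucc_iff.2 hlt) (hmem j))
  rw [← Finset.add_sum_erase s _ ht.1] at hg
  have htop_mem : g t • v t ∈ F (level t).castSucc := by
    rw [eq_neg_of_add_eq_zero_left hg]
    exact neg_mem hrest
  exact hnot t ((smul_mem_iff _ ht.2).1 htop_mem)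

theorem Module.Basis.exists_notMem_flag_castSucc_and_mem_flag_succ (b : Basis (Fin m) K V)
    {v : V} (hv : v ≠ 0) : ∃ j : Fin m, v ∉ b.flag j.castSucc ∧ v ∈ b.flag j.succ :=
  Fin.exists_not_castSucc_and_succ (p := (v ∈ b.flag ·)) (by simpa [b.flag_zero])
    (by simp [b.flag_last])

theorem exists_basis_mem_range_of_span_eq_top {ι : Type*} {v : ι → V}
    (hv : span K (range v) = ⊤) (hV : finrank K V = m) [FiniteDimensional K V] :
    ∃ b : Basis (Fin m) K V, ∀ j, b j ∈ range v := by
  obtain ⟨κ, a, -, hspan, hli⟩ := exists_linearIndependent' K v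
  let b := Basis.mk hli (by rw [hspan, hv])
  exact ⟨b.reindex (b.indexEquiv (finBasisOfFinrankEq K V hV)), fun j => by simp [b]⟩

end Flag

section Matrix

variable {K : Type*} [Field K]

theorem Matrix.rank_eq_card_iff_span_cols_eq_top {m n : Type*} [Fintype m] [Fintype n]
    (A : Matrix m n K) : A.rank = Fintype.card m ↔ span K (range A.col) = ⊤ := by
  rw [rank_eq_finrank_span_cols, eq_top_iff_finrank_eq, finrank_fintype_fun_eq_card]

theorem Matrix.det_submatrix_ne_zero_iff_linearIndependent {m n : Type*} [Fintype m]
    [DecidableEq m] (A : Matrix m n K) (e : m → n) :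
    (A.submatrix id e).det ≠ 0 ↔ LinearIndependent K (A.col ∘ e) := by
  rw [← isUnit_iff_ne_zero, ← isUnit_iff_isUnit_det, ← linearIndependent_cols_iff_isUnit]
  rfl

end Matrix

section Transversal

variable {K : Type*} [Field K] {m n : ℕ} {𝒯 : Set (Finset (Fin n))}

theorem Matrix.rank_lt_of_transversal (h𝒯 : ∀ H ∈ 𝒯, H.card = m) (htrans : Transversal n m 𝒯)
    (A : Matrix (Fin m) (Fin n) K) (hA : ∀ i, A.col i ≠ 0)
    (hminors : ∀ H (hH : H ∈ 𝒯), (A.submatrix id (H.orderEmbOfFin (h𝒯 H hH))).det = 0) :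
    A.rank < m := by
  by_contra! hrank
  have hspan : span K (range A.col) = ⊤ := A.rank_eq_card_iff_span_cols_eq_top.1 <| by
    simpa using le_antisymm A.rank_le_height hrank
  obtain ⟨b, hb⟩ := exists_basis_mem_range_of_span_eq_top hspan (finrank_fin_fun K)
  choose level hnot hmem using fun i => b.exists_notMem_flag_castSucc_and_mem_flag_succ (hA i)
  have hsurj : Surjective level := fun j => by
    obtain ⟨i, hi⟩ := hb j
    refine ⟨i, eq_of_notMem_castSucc_of_mem_succ b.flag_mono (hnot i) (hmem i) ?_ ?_⟩
    · rw [hi, b.self_mem_flag_iff]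
      exact lt_irrefl _
    · rw [hi]
      exact b.self_mem_flag Fin.castSucc_lt_succ
  obtain ⟨H, hH, hfibers⟩ := htrans level hsurj
  refine (A.det_submatrix_ne_zero_iff_linearIndependent _).2 ?_ (hminors H hH)
  exact linearIndependent_of_injective_level b.flag_mono
    ((H.card_filter_eq_one_iff_injective (h𝒯 H hH) level).1 hfibers) (fun _ => hnot _)
    (fun _ => hmem _)

theorem transversal_of_forall_rank_lt (h𝒯 : ∀ H ∈ 𝒯, H.card = m)
    (hcond : ∀ A : Matrix (Fin m) (Fin n) K, (∀ i, A.col i ≠ 0) →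
      (∀ H (hH : H ∈ 𝒯), (A.submatrix id (H.orderEmbOfFin (h𝒯 H hH))).det = 0) → A.rank < m) :
    Transversal n m 𝒯 := by
  intro P hP
  by_contra hno
  let A : Matrix (Fin m) (Fin n) K := Matrix.of fun r i => Pi.basisFun K (Fin m) (P i) r
  have hcols : range A.col = range (Pi.basisFun K (Fin m)) :=
    hP.range_comp (⇑(Pi.basisFun K (Fin m)))
  have hrank : A.rank = m := by
    simpa using A.rank_eq_card_iff_span_cols_eq_top.2 (hcols ▸ (Pi.basisFun K (Fin m)).span_eq)
  refine (hcond A (fun i => (Pi.basisFun K (Fin m)).ne_zero (P i)) fun H hH => ?_).ne hrank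
  have hnotinj : ¬Injective (P ∘ H.orderEmbOfFin (h𝒯 H hH)) := fun hinj =>
    hno ⟨H, hH, (H.card_filter_eq_one_iff_injective _ P).2 hinj⟩
  obtain ⟨l₁, l₂, hP₁₂ : P _ = P _, hne⟩ := not_injective_iff.1 hnotinj
  exact Matrix.det_zero_of_column_eq hne fun r => by simp [A, hP₁₂]

end Transversal

theorem minors_cut_out_degenerate_iff_transversal_general {k : Type*} [Field k] {d n : ℕ}
    (𝒯 : Set (Finset (Fin n))) (h𝒯 : ∀ H ∈ 𝒯, H.card = d + 1) :
    (∀ A : Matrix (Fin (d + 1)) (Fin n) k, (∀ i, (fun r => A r i) ≠ 0) →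
        (∀ (H : Finset (Fin n)) (hH : H ∈ 𝒯),
          Matrix.det (Matrix.of fun r j => A r (H.orderEmbOfFin (h𝒯 H hH) j)) = 0) →
        A.rank ≤ d) ↔
      Transversal n (d + 1) 𝒯 :=
  ⟨fun h => transversal_of_forall_rank_lt h𝒯 fun A hA hminors =>
      Nat.lt_succ_of_le (h A hA hminors),
    fun h A hA hminors => Nat.le_of_lt_succ (A.rank_lt_of_transversal h𝒯 h hA hminors)⟩

/-- For a collection `𝒯` of `(d+1)`-element subsets of `[n]`, the maximal minors
`{m_H : H ∈ 𝒯}` cut out set-theoretically the locus of degenerate configurations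
(matrices of rank ≤ d with nonzero columns) iff `𝒯` has the transversality
property. -/
theorem minors_cut_out_degenerate_iff_transversal {k : Type*} [Field k] [IsAlgClosed k]
    {d n : ℕ} (hd : 1 ≤ d + 1) (hn : d + 1 ≤ n)
    (𝒯 : Set (Finset (Fin n))) (h𝒯 : ∀ H ∈ 𝒯, H.card = d + 1) :
    (∀ A : Matrix (Fin (d + 1)) (Fin n) k, (∀ i, (fun r => A r i) ≠ 0) →
        (∀ (H : Finset (Fin n)) (hH : H ∈ 𝒯),
          Matrix.det (Matrix.of fun r j => A r (H.orderEmbOfFin (h𝒯 H hH) j)) = 0) →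
        A.rank ≤ d) ↔
      Transversal n (d + 1) 𝒯 :=
  minors_cut_out_degenerate_iff_transversal_general 𝒯 h𝒯
end

section
/- Let n ≥ d + 1 ≥ 1 and let 𝒯 be a (d+1)-uniform hypergraph on [n] satisfying the transversality property. Then binom(n, d) ≤ (d+1)·|𝒯|, i.e., |𝒯| ≥ binom(n,d)/(d+1). -/
lemma exists_good_H {n d : ℕ} (hn : d + 1 ≤ n)
    (𝒯 : Finset (Finset (Fin n)))
    (htrans : Transversal n (d + 1) (↑𝒯 : Set (Finset (Fin n))))
    (J : Finset (Fin n)) (hJ : J.card = n - d) :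
    ∃ H ∈ 𝒯, (J ∩ H).card = 1 := by
  classical
  set C := Jᶜ with hCdef
  have hC : C.card = d := by
    have := Finset.card_compl J
    simp only [Fintype.card_fin] at this
    rw [hCdef, this, hJ]; omega
  let e := C.orderIsoOfFin hC
  set P : Fin n → Fin (d + 1) := fun i =>
    if h : i ∈ C then (e.symm ⟨i, h⟩).castSucc else Fin.last d with hP
  have hmemJ : ∀ i, P i = Fin.last d ↔ i ∈ J := by
    intro i
    constructor
    · intro h
      by_contra hiJ
      have hiC : i ∈ C := by simp [hCdef, hiJ]
      rw [hP] at h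
      simp only [dif_pos hiC] at h
      exact absurd h (Fin.castSucc_lt_last _).ne
    · intro hiJ
      have hiC : i ∉ C := by simp [hCdef, hiJ]
      simp [hP, dif_neg hiC]
  have hsurj : Function.Surjective P := by
    intro j
    refine Fin.lastCases ?_ ?_ j
    · have hJne : J.Nonempty := by
        rw [← Finset.card_pos, hJ]; omega
      obtain ⟨x, hx⟩ := hJne
      exact ⟨x, (hmemJ x).mpr hx⟩
    · intro k
      refine ⟨(e k : Fin n), ?_⟩
      have hk : (e k : Fin n) ∈ C := (e k).2
      rw [hP]
      simp only [dif_pos hk]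
      congr 1
      have : (⟨(e k : Fin n), hk⟩ : C) = e k := Subtype.ext rfl
      rw [this, OrderIso.symm_apply_apply]
  obtain ⟨H, hH, hfil⟩ := htrans P hsurj
  refine ⟨H, hH, ?_⟩
  have := hfil (Fin.last d)
  have heq : J ∩ H = H.filter fun i => P i = Fin.last d := by
    ext i
    simp only [Finset.mem_inter, Finset.mem_filter]
    rw [hmemJ i]
    tauto
  rw [heq]
  exact this

/-- A `(d+1)`-uniform hypergraph on `[n]` (with `n ≥ d + 1`) satisfying the
transversality property has at least `binom(n,d)/(d+1)` edges. -/
theorem transversal_card_lower_bound {n d : ℕ} (hn : d + 1 ≤ n)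
    (𝒯 : Finset (Finset (Fin n))) (hcard : ∀ H ∈ 𝒯, H.card = d + 1)
    (htrans : Transversal n (d + 1) (↑𝒯 : Set (Finset (Fin n)))) :
    n.choose d ≤ (d + 1) * 𝒯.card := by
  classical
  set S : Finset (Finset (Fin n)) :=
    Finset.univ.powersetCard (n - d) with hSdef
  have hSmem : ∀ J ∈ S, J.card = n - d := by
    intro J hJ
    simp only [hSdef, Finset.mem_powersetCard] at hJ
    exact hJ.2
  have hSc : S.card = n.choose d := by
    rw [hSdef, Finset.card_powersetCard, Finset.card_univ, Fintype.card_fin,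
      Nat.choose_symm (by omega)]
  have hchoice : ∀ J ∈ S, ∃ H ∈ 𝒯, (J ∩ H).card = 1 := fun J hJ =>
    exists_good_H hn 𝒯 htrans J (hSmem J hJ)
  set f : Finset (Fin n) → Finset (Fin n) := fun J =>
    if h : J ∈ S then (hchoice J h).choose else ∅ with hf
  have hfspec : ∀ J ∈ S, f J ∈ 𝒯 ∧ (J ∩ f J).card = 1 := by
    intro J hJ
    rw [hf]
    simp only [dif_pos hJ]
    obtain ⟨h1, h2⟩ := (hchoice J hJ).choose_spec
    exact ⟨h1, h2⟩
  have himg : S.image f ⊆ 𝒯 := by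
    intro H hH
    obtain ⟨J, hJ, rfl⟩ := Finset.mem_image.mp hH
    exact (hfspec J hJ).1
  have key : S.card ≤ (d + 1) * (S.image f).card := by
    apply Finset.card_le_mul_card_image
    intro H hHimg
    have hHT : H ∈ 𝒯 := himg hHimg
    have hHc : H.card = d + 1 := hcard H hHT
    -- fiber over H injects into H via J ↦ unique element of J ∩ H
    have hfib : ∀ J ∈ S.filter (fun x => f x = H), ∃ a, J ∩ H = {a} := by
      intro J hJ
      rw [Finset.mem_filter] at hJ
      have := (hfspec J hJ.1).2
      rw [hJ.2] at this
      exact Finset.card_eq_one.mp this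
    have hdet : ∀ J ∈ S.filter (fun x => f x = H), ∀ a, J ∩ H = {a} → J = {a} ∪ Hᶜ := by
      intro J hJ a ha
      rw [Finset.mem_filter] at hJ
      have hJc := hSmem J hJ.1
      have hinter : (J ∩ H).card = 1 := by rw [ha]; simp
      have hdiff : J \ H = Hᶜ := by
        apply Finset.eq_of_subset_of_card_le
        · intro x hx
          rw [Finset.mem_sdiff] at hx
          simpa using hx.2
        · have h1 := Finset.card_inter_add_card_sdiff J H
          have h2 : Hᶜ.card = n - (d + 1) := by
            have := Finset.card_compl H
            simp only [Fintype.card_fin] at this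
            rw [this, hHc]
          omega
      have hJu : J = J ∩ H ∪ J \ H := by
        ext x
        simp only [Finset.mem_union, Finset.mem_inter, Finset.mem_sdiff]
        tauto
      rw [hJu, ha, hdiff]
    haveI : NeZero n := ⟨by omega⟩
    calc (S.filter fun x => f x = H).card ≤ H.card := by
          apply Finset.card_le_card_of_injOn
            (fun J => if h : (J ∩ H).Nonempty then (J ∩ H).min' h else 0)
          · intro J hJ
            obtain ⟨a, ha⟩ := hfib J hJ
            have hne : (J ∩ H).Nonempty := by rw [ha]; exact ⟨a, by simp⟩
            simp only [dif_pos hne]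
            have hm := (J ∩ H).min'_mem hne
            exact (Finset.mem_inter.mp hm).2
          · intro J1 h1 J2 h2 heq
            obtain ⟨a, ha⟩ := hfib J1 h1
            obtain ⟨b, hb⟩ := hfib J2 h2
            have hne1 : (J1 ∩ H).Nonempty := by rw [ha]; exact ⟨a, by simp⟩
            have hne2 : (J2 ∩ H).Nonempty := by rw [hb]; exact ⟨b, by simp⟩
            simp only [dif_pos hne1, dif_pos hne2] at heq
            have hab : a = b := by
              have e1 : (J1 ∩ H).min' hne1 = a := by
                have hm := (J1 ∩ H).min'_mem hne1
                have : (J1 ∩ H).min' hne1 ∈ ({a} : Finset (Fin n)) := by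
                  rw [← ha]; exact hm
                exact Finset.mem_singleton.mp this
              have e2 : (J2 ∩ H).min' hne2 = b := by
                have hm := (J2 ∩ H).min'_mem hne2
                have : (J2 ∩ H).min' hne2 ∈ ({b} : Finset (Fin n)) := by
                  rw [← hb]; exact hm
                exact Finset.mem_singleton.mp this
              rw [e1, e2] at heq; exact heq
            rw [hdet J1 h1 a ha, hdet J2 h2 b hb, hab]
      _ = d + 1 := hHc
  calc n.choose d = S.card := hSc.symm
    _ ≤ (d + 1) * (S.image f).card := key
    _ ≤ (d + 1) * 𝒯.card := by
      exact Nat.mul_le_mul_left _ (Finset.card_le_card himg)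
end

section
/- Let k be an algebraically closed field, n ≥ 6, and let 𝒯 be a collection of 6-element subsets of [n]. Then the following are equivalent: (i) for every tuple of nonzero vectors v₁, …, v_n ∈ k³, the conditions φ_H(v₁,…,v_n) = 0 for all H ∈ 𝒯 hold if and only if v₁, …, v_n lie on a conic; (ii) 𝒯 satisfies the transversality property. -/
/-!
Everything is read off the Veronese images `ver (v i) ∈ k⁶`: the points lie on no conic iff these
images span `k⁶`, and `φ_H ≠ 0` iff the images of the points of `H` are linearly independent.

If the images span, pick a basis `e₁, …, e₆` among them and put `i` into the part `j` of the last
nonzero `e`-coordinate of `ver (v i)`. This is a partition into six nonempty parts (`e_j` lies in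
part `j`), and the coordinate matrix of any transversal is triangular with nonzero diagonal, so a
transversal `H ∈ 𝒯` has `φ_H ≠ 0`. Conversely, for a partition, send each part to one of six
fixed points on no conic: some `φ_H` must then be nonzero, and it vanishes unless `H` is a
transversal, since otherwise two of its columns coincide.
-/

open Module Submodule Set Function

theorem Module.Basis.linearIndependent_of_repr_lowerTriangular {K V κ : Type*} [Field K]
    [AddCommGroup V] [Module K V] [Fintype κ] [LinearOrder κ] (e : Basis κ K V) {w : κ → V}
    (hdiag : ∀ j, e.repr (w j) j ≠ 0) (hupper : ∀ j l, j < l → e.repr (w j) l = 0) :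
    LinearIndependent K w := by
  let M : Matrix κ κ K := Matrix.of fun j l => e.repr (w j) l
  have hM : M.det ≠ 0 := by
    rw [Matrix.det_of_isLowerTriangular M fun j l hjl => hupper j l hjl]
    exact Finset.prod_ne_zero_iff.2 fun j _ => hdiag j
  have hrows : LinearIndependent K M.row :=
    Matrix.linearIndependent_rows_iff_isUnit.2 (M.isUnit_iff_isUnit_det.2 hM.isUnit)
  exact LinearIndependent.of_comp e.equivFun.toLinearMap hrows

theorem Module.Basis.exists_fin_subfamily_of_span_eq_top {K V ι : Type*} [Field K] [AddCommGroup V]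
    [Module K V] [FiniteDimensional K V] {d : ℕ} (hd : finrank K V = d) {u : ι → V}
    (hspan : span K (range u) = ⊤) : ∃ (e : Basis (Fin d) K V) (c : Fin d → ι), ⇑e = u ∘ c := by
  let b := Basis.ofSpan hspan.ge
  have : Finite _ := Module.Finite.finite_basis b
  let e := b.reindex (Finite.equivFinOfCardEq (by rw [← finrank_eq_nat_card_basis b, hd]))
  have he : ∀ j, e j ∈ range u := fun j =>
    Basis.ofSpan_subset hspan.ge (by simp only [e, Basis.reindex_apply]; exact mem_range_self _)
  choose c hc using he
  exact ⟨e, c, funext fun j => (hc j).symm⟩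

theorem Finsupp.exists_ne_zero_forall_lt_eq_zero {κ K : Type*} [LinearOrder κ] [Zero K]
    {f : κ →₀ K} (hf : f ≠ 0) : ∃ j, f j ≠ 0 ∧ ∀ l, j < l → f l = 0 := by
  have hne : f.support.Nonempty := Finsupp.support_nonempty_iff.2 hf
  refine ⟨f.support.max' hne, Finsupp.mem_support_iff.1 (f.support.max'_mem hne), fun l hl => ?_⟩
  by_contra h
  exact (f.support.le_max' l (Finsupp.mem_support_iff.2 h)).not_gt hl

theorem exists_partition_linearIndependent_of_span_eq_top {K V ι : Type*} [Field K]
    [AddCommGroup V] [Module K V] [FiniteDimensional K V] {d : ℕ} (hd : finrank K V = d)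
    {u : ι → V} (hu : ∀ i, u i ≠ 0) (hspan : span K (range u) = ⊤) :
    ∃ P : ι → Fin d, Surjective P ∧
      ∀ b : Fin d → ι, Injective (P ∘ b) → LinearIndependent K (u ∘ b) := by
  obtain ⟨e, c, he⟩ := Basis.exists_fin_subfamily_of_span_eq_top hd hspan
  choose P hdiag hupper using fun i =>
    Finsupp.exists_ne_zero_forall_lt_eq_zero (e.repr.map_ne_zero_iff.2 (hu i))
  refine ⟨P, fun j => ⟨c j, ?_⟩, fun b hb => ?_⟩
  · have hcj : e.repr (u (c j)) = Finsupp.single j 1 := by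
      rw [show u (c j) = e j from (congrFun he j).symm, e.repr_self]
    by_contra hne
    exact hdiag (c j) (by rw [hcj]; exact Finsupp.single_eq_of_ne hne)
  · let σ := Equiv.ofBijective _ (Finite.injective_iff_bijective.1 hb)
    have hσ : ∀ j, P (b (σ.symm j)) = j := σ.apply_symm_apply
    have hw : LinearIndependent K (u ∘ b ∘ σ.symm) :=
      e.linearIndependent_of_repr_lowerTriangular
        (fun j => by simpa only [comp_apply, hσ] using hdiag (b (σ.symm j)))
        (fun j l hjl => hupper (b (σ.symm j)) l (by rwa [hσ]))
    simpa [comp_assoc] using hw.comp σ σ.injective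

theorem exists_dotProduct_eq_zero_iff_span_ne_top {K m ι : Type*} [Field K] [Fintype m]
    [DecidableEq m] (u : ι → m → K) :
    (∃ c : m → K, c ≠ 0 ∧ ∀ i, c ⬝ᵥ u i = 0) ↔ span K (range u) ≠ ⊤ := by
  constructor
  · rintro ⟨c, hc0, hc⟩ htop
    have hker : span K (range u) ≤ LinearMap.ker (dotProductEquiv K m c) :=
      span_le.2 (range_subset_iff.2 hc)
    rw [htop, top_le_iff, LinearMap.ker_eq_top] at hker
    exact hc0 ((dotProductEquiv K m).map_eq_zero_iff.1 hker)
  · intro hspan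
    obtain ⟨f, hf0, hf⟩ := (span K (range u)).exists_le_ker_of_lt_top hspan.lt_top
    refine ⟨(dotProductEquiv K m).symm f, by simpa using hf0, fun i => ?_⟩
    rw [← dotProductEquiv_apply_apply, LinearEquiv.apply_symm_apply]
    exact hf (subset_span (mem_range_self i))

theorem Matrix.det_of_cols_ne_zero_iff_linearIndependent {K m : Type*} [Field K] [Fintype m]
    [DecidableEq m] (w : m → m → K) : (Matrix.of fun r j => w j r).det ≠ 0 ↔ LinearIndependent K w := by
  rw [← isUnit_iff_ne_zero, ← Matrix.isUnit_iff_isUnit_det,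
    ← Matrix.linearIndependent_cols_iff_isUnit]
  rfl

theorem Finset.forall_card_filter_eq_one_iff_injOn {α β : Type*} [Fintype β] [DecidableEq β]
    {H : Finset α} (hH : H.card = Fintype.card β) (P : α → β) :
    (∀ j, (H.filter fun i => P i = j).card = 1) ↔ Set.InjOn P H := by
  constructor
  · intro h x hx y hy hxy
    exact Finset.card_le_one.1 (h (P y)).le x (by simpa [hxy] using hx) y (by simpa using hy)
  · intro hinj j
    have himage : H.image P = Finset.univ :=
      Finset.eq_univ_of_card _ (by rw [Finset.card_image_of_injOn hinj, hH])
    obtain ⟨x, hx, rfl⟩ := Finset.mem_image.1 (himage ▸ Finset.mem_univ j)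
    refine Finset.card_eq_one.2 ⟨x, Finset.eq_singleton_iff_unique_mem.2 ⟨by simp [hx], ?_⟩⟩
    intro y hy
    rw [Finset.mem_filter] at hy
    exact hinj hy.1 hx hy.2

theorem Finset.forall_card_filter_eq_one_iff_injective {α : Type*} [LinearOrder α] {d : ℕ}
    {H : Finset α} (hH : H.card = d) (P : α → Fin d) :
    (∀ j, (H.filter fun i => P i = j).card = 1) ↔ Injective (P ∘ H.orderEmbOfFin hH) := by
  rw [Finset.forall_card_filter_eq_one_iff_injOn (hH.trans (Fintype.card_fin d).symm)]
  constructor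
  · intro hinj
    exact (hinj.injective_iff _ (by simp)).2 (H.orderEmbOfFin hH).injective
  · intro hinj
    simpa using hinj.injOn_range

theorem ver_ne_zero {k : Type*} [CommRing k] [NoZeroDivisors k] {v : Fin 3 → k} (hv : v ≠ 0) :
    ver v ≠ 0 := by
  intro h
  apply hv
  funext i
  fin_cases i
  exacts [mul_self_eq_zero.1 (congrFun h 0), mul_self_eq_zero.1 (congrFun h 1),
    mul_self_eq_zero.1 (congrFun h 2)]

def offConicPoints {k : Type*} [CommRing k] : Fin 6 → Fin 3 → k :=
  ![![1, 0, 0], ![0, 1, 0], ![0, 0, 1], ![1, 1, 0], ![1, 0, 1], ![0, 1, 1]]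

theorem offConicPoints_ne_zero {k : Type*} [CommRing k] [Nontrivial k] (j : Fin 6) :
    (offConicPoints j : Fin 3 → k) ≠ 0 := by
  fin_cases j <;> simp [offConicPoints]

theorem span_range_ver_offConicPoints {k : Type*} [Field k] :
    span k (range fun j => ver (offConicPoints j : Fin 3 → k)) = ⊤ := by
  by_contra hspan
  obtain ⟨c, hc0, hc⟩ := (exists_dotProduct_eq_zero_iff_span_ne_top _).2 hspan
  apply hc0
  have h0 := hc 0
  have h1 := hc 1
  have h2 := hc 2
  have h3 := hc 3
  have h4 := hc 4
  have h5 := hc 5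
  simp only [dotProduct, ver, offConicPoints, Fin.sum_univ_six, Matrix.cons_val',
    Matrix.cons_val_zero, Matrix.cons_val_one, Matrix.cons_val, Matrix.cons_val_fin_one,
    mul_one, mul_zero, add_zero, zero_add] at h0 h1 h2 h3 h4 h5
  have h3' : c 3 = 0 := by linear_combination h3 - h0 - h1
  have h4' : c 4 = 0 := by linear_combination h4 - h0 - h2
  have h5' : c 5 = 0 := by linear_combination h5 - h1 - h2
  funext j
  fin_cases j <;> assumption

theorem phiH_cut_out_conic_iff_transversal_general {k : Type*} [Field k]
    {n : ℕ} (𝒯 : Set (Finset (Fin n))) (h𝒯 : ∀ H ∈ 𝒯, H.card = 6) :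
    (∀ v : Fin n → (Fin 3 → k), (∀ i, v i ≠ 0) →
        ((∀ (H : Finset (Fin n)) (hH : H ∈ 𝒯),
            Matrix.det (Matrix.of fun r j =>
              ver (v (H.orderEmbOfFin (h𝒯 H hH) j)) r) = 0) ↔
          ∃ c : Fin 6 → k, c ≠ 0 ∧ ∀ i, ∑ j, c j * ver (v i) j = 0)) ↔
      Transversal n 6 𝒯 := by
  constructor
  · intro hcut P hP
    let v : Fin n → Fin 3 → k := fun i => offConicPoints (P i)
    have hoff : ¬∃ c : Fin 6 → k, c ≠ 0 ∧ ∀ i, ∑ j, c j * ver (v i) j = 0 := fun hconic =>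
      (exists_dotProduct_eq_zero_iff_span_ne_top _).1 hconic
        ((hP.range_comp fun j => ver (offConicPoints j : Fin 3 → k)) ▸
          span_range_ver_offConicPoints)
    obtain ⟨H, hH, hdet⟩ :=
      not_forall₂.1 (mt (hcut v fun i => offConicPoints_ne_zero (P i)).1 hoff)
    refine ⟨H, hH, (Finset.forall_card_filter_eq_one_iff_injective (h𝒯 H hH) P).2 ?_⟩
    intro a b hab
    exact ((Matrix.det_of_cols_ne_zero_iff_linearIndependent _).1 hdet).injective
      (congrArg (fun j => ver (offConicPoints j)) hab)
  · intro htr v hv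
    constructor
    · intro hall
      refine (exists_dotProduct_eq_zero_iff_span_ne_top _).2 fun hspan => ?_
      obtain ⟨P, hPsurj, hP⟩ := exists_partition_linearIndependent_of_span_eq_top
        (finrank_fin_fun k) (fun i => ver_ne_zero (hv i)) hspan
      obtain ⟨H, hH, hfib⟩ := htr P hPsurj
      exact (Matrix.det_of_cols_ne_zero_iff_linearIndependent _).2
        (hP _ ((Finset.forall_card_filter_eq_one_iff_injective (h𝒯 H hH) P).1 hfib)) (hall H hH)
    · intro hconic H hH
      by_contra hdet
      refine (exists_dotProduct_eq_zero_iff_span_ne_top _).1 hconic ?_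
      have hli := (Matrix.det_of_cols_ne_zero_iff_linearIndependent _).1 hdet
      exact eq_top_mono (span_mono (range_comp_subset_range (H.orderEmbOfFin (h𝒯 H hH)) _))
        (hli.span_eq_top_of_card_eq_finrank' (by simp))

/-- For a collection `𝒯` of 6-element subsets of `[n]` (`n ≥ 6`), the equations
`{φ_H}_{H ∈ 𝒯}` cut out the conic locus `V₂,ₙ` set-theoretically iff `𝒯` satisfies
the transversality property. -/
theorem phiH_cut_out_conic_iff_transversal {k : Type*} [Field k] [IsAlgClosed k]
    {n : ℕ} (hn : 6 ≤ n) (𝒯 : Set (Finset (Fin n))) (h𝒯 : ∀ H ∈ 𝒯, H.card = 6) :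
    (∀ v : Fin n → (Fin 3 → k), (∀ i, v i ≠ 0) →
        ((∀ (H : Finset (Fin n)) (hH : H ∈ 𝒯),
            Matrix.det (Matrix.of fun r j =>
              ver (v (H.orderEmbOfFin (h𝒯 H hH) j)) r) = 0) ↔
          ∃ c : Fin 6 → k, c ≠ 0 ∧ ∀ i, ∑ j, c j * ver (v i) j = 0)) ↔
      Transversal n 6 𝒯 :=
  phiH_cut_out_conic_iff_transversal_general 𝒯 h𝒯
end

section
/- Let k be a field and 2 ≤ d ≤ n − 2. Let A ∈ k^{(d+1)×n} be a matrix all of whose columns are nonzero, representing a strongly non-degenerate point configuration (for every nonzero row vector u ∈ k^{d+1}, the row vector u·A has at least two nonzero entries). Let B ∈ k^{(n−d−1)×n} be an affine Gale transform of A (rank B = n − d − 1 and A·Bᵀ = 0). Then B also represents a strongly non-degenerate configuration: every column of B is nonzero, and for every nonzero row vector w ∈ k^{n−d−1}, the row vector w·B has at least two nonzero entries. -/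
/-- A matrix `A ∈ k^{m×n}` with nonzero columns represents a strongly non-degenerate
point configuration if for every nonzero row vector `u`, the row vector `u·A` has at
least two nonzero entries. -/
def StronglyNondegenerate {k : Type*} [Field k] {m n : ℕ}
    (A : Matrix (Fin m) (Fin n) k) : Prop :=
  (∀ i, (fun r => A r i) ≠ 0) ∧
    ∀ u : Fin m → k, u ≠ 0 → ∃ i j : Fin n, i ≠ j ∧
      (∑ r, u r * A r i) ≠ 0 ∧ (∑ r, u r * A r j) ≠ 0

/-!
The row spaces `V` of `A` and `W` of `B` are orthogonal complements in `kⁿ`: `A Bᵀ = 0` gives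
`W ⊆ V^⊥`, and the rank conditions make the dimensions match. A column `i` of a matrix vanishes
iff `eᵢ` is orthogonal to its row space, and a nonzero vector with at most one nonzero entry
is a multiple of some `eᵢ`. So strong non-degeneracy of `A` says that neither `V` nor `V^⊥`
contains a coordinate vector, a condition symmetric under `V ↔ V^⊥ = W`.
-/

open Matrix Function

namespace Matrix

variable {k l m n : Type*} [Field k] [Fintype n]

theorem vecMul_injective_of_rank_eq_card [Fintype m] {B : Matrix m n k}
    (hB : B.rank = Fintype.card m) : Injective B.vecMul := by
  have hrange : Module.finrank k (LinearMap.range B.vecMulLinear) = Fintype.card m := by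
    rw [← mulVecLin_transpose, ← rank, rank_transpose, hB]
  have hrn := LinearMap.finrank_range_add_finrank_ker B.vecMulLinear
  rwa [hrange, Module.finrank_fintype_fun_eq_card, Nat.add_eq_left, Submodule.finrank_eq_zero,
    LinearMap.ker_eq_bot] at hrn

theorem range_vecMulLinear_eq_ker_mulVecLin [Fintype l] {A : Matrix l n k} {B : Matrix m n k}
    (hA : Injective A.vecMulLinear) (hAB : A * Bᵀ = 0)
    (hcard : B.rank + Fintype.card l = Fintype.card n) :
    LinearMap.range A.vecMulLinear = LinearMap.ker B.mulVecLin := by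
  refine Submodule.eq_of_le_of_finrank_eq ?_ ?_
  · rintro _ ⟨u, rfl⟩
    rw [LinearMap.mem_ker, mulVecLin_apply, vecMulLinear_apply, ← vecMul_transpose, vecMul_vecMul,
      hAB, vecMul_zero]
  · have hrn := LinearMap.finrank_range_add_finrank_ker B.mulVecLin
    rw [Module.finrank_fintype_fun_eq_card] at hrn
    change B.rank + _ = _ at hrn
    rw [LinearMap.finrank_range_of_inj hA, Module.finrank_fintype_fun_eq_card]
    omega

theorem exists_transpose_eq_zero_of_mulVec_eq_zero {A : Matrix m n k} {v : n → k} (hv : v ≠ 0)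
    (hsupp : (support v).Subsingleton) (hAv : A *ᵥ v = 0) : ∃ i, Aᵀ i = 0 := by
  obtain ⟨i, hi⟩ := Function.ne_iff.mp hv
  refine ⟨i, funext fun r => ?_⟩
  have hr : A r i * v i = 0 := by
    have hAvr := congrFun hAv r
    rwa [mulVec, dotProduct, Fintype.sum_eq_single i fun j hj => by
      rw [notMem_support.mp fun hj' => hj (hsupp hj' hi), mul_zero]] at hAvr
  exact (mul_eq_zero.mp hr).resolve_right hi

theorem transpose_ne_zero_of_range_vecMulLinear_eq_ker [Fintype l] [DecidableEq n]
    {A : Matrix l n k} {B : Matrix m n k}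
    (hker : LinearMap.range A.vecMulLinear = LinearMap.ker B.mulVecLin)
    (hA : ∀ u ≠ 0, (support (u ᵥ* A)).Nontrivial) (i : n) : Bᵀ i ≠ 0 := by
  intro hi
  obtain ⟨u, hu⟩ : Pi.single i 1 ∈ LinearMap.range A.vecMulLinear := by
    rw [hker, LinearMap.mem_ker, mulVecLin_apply, mulVec_single_one]
    exact hi
  rw [vecMulLinear_apply] at hu
  have hu0 : u ≠ 0 := by
    rintro rfl
    simpa using congrFun hu i
  exact (hA u hu0).not_subsingleton (hu ▸ Pi.subsingleton_support_single)

theorem support_vecMul_nontrivial_of_mul_transpose_eq_zero [Fintype m] [Fintype l]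
    {A : Matrix l n k} {B : Matrix m n k} (hA : ∀ i, Aᵀ i ≠ 0) (hB : Injective B.vecMul)
    (hAB : A * Bᵀ = 0) {w : m → k} (hw : w ≠ 0) : (support (w ᵥ* B)).Nontrivial := by
  have hAwB : A *ᵥ (w ᵥ* B) = 0 := by
    rw [← vecMul_transpose, vecMul_vecMul, ← transpose_transpose B, ← transpose_mul, hAB,
      transpose_zero, vecMul_zero]
  by_contra h
  obtain ⟨i, hi⟩ := exists_transpose_eq_zero_of_mulVec_eq_zero
    (by simpa using hB.ne hw) (Set.not_nontrivial_iff.mp h) hAwB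
  exact hA i hi

end Matrix

theorem stronglyNondegenerate_iff {k : Type*} [Field k] {m n : ℕ}
    {A : Matrix (Fin m) (Fin n) k} :
    StronglyNondegenerate A ↔ (∀ i, Aᵀ i ≠ 0) ∧ ∀ u ≠ 0, (support (u ᵥ* A)).Nontrivial :=
  and_congr Iff.rfl <| forall₂_congr fun _ _ =>
    ⟨fun ⟨i, j, hij, hi, hj⟩ => ⟨i, hi, j, hj, hij⟩, fun ⟨i, hi, j, hj, hij⟩ => ⟨i, j, hij, hi, hj⟩⟩

theorem StronglyNondegenerate.vecMulLinear_injective {k : Type*} [Field k] {m n : ℕ}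
    {A : Matrix (Fin m) (Fin n) k} (hA : StronglyNondegenerate A) :
    Injective A.vecMulLinear :=
  (injective_iff_map_eq_zero _).mpr fun u hu => by_contra fun h =>
    ((stronglyNondegenerate_iff.mp hA).2 u h).nonempty.ne_empty
      (by rw [← vecMulLinear_apply, hu, support_zero])

theorem gale_of_stronglyNondegenerate_general {k : Type*} [Field k] {d n : ℕ}
    (A : Matrix (Fin (d + 1)) (Fin n) k) (hA : StronglyNondegenerate A)
    (B : Matrix (Fin (n - d - 1)) (Fin n) k)
    (hB : B.rank = n - d - 1) (hAB : A * B.transpose = 0) :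
    StronglyNondegenerate B := by
  have hA_inj := hA.vecMulLinear_injective
  have hdn : d + 1 ≤ n := by
    simpa using LinearMap.finrank_le_finrank_of_injective hA_inj
  have hker := range_vecMulLinear_eq_ker_mulVecLin hA_inj hAB (by rw [hB, Fintype.card_fin, Fintype.card_fin]; omega)
  have hB_inj := vecMul_injective_of_rank_eq_card (by rw [hB, Fintype.card_fin])
  obtain ⟨hAcol, hArow⟩ := stronglyNondegenerate_iff.mp hA
  exact stronglyNondegenerate_iff.mpr
    ⟨transpose_ne_zero_of_range_vecMulLinear_eq_ker hker hArow,
      fun _ hw => support_vecMul_nontrivial_of_mul_transpose_eq_zero hAcol hB_inj hAB hw⟩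

/-- Proposition 4.11(3): every affine Gale transform of a strongly non-degenerate
configuration is strongly non-degenerate. -/
theorem gale_of_stronglyNondegenerate {k : Type*} [Field k] {d n : ℕ}
    (hd : 2 ≤ d) (hn : d + 2 ≤ n)
    (A : Matrix (Fin (d + 1)) (Fin n) k) (hA : StronglyNondegenerate A)
    (B : Matrix (Fin (n - d - 1)) (Fin n) k)
    (hB : B.rank = n - d - 1) (hAB : A * B.transpose = 0) :
    StronglyNondegenerate B :=
  gale_of_stronglyNondegenerate_general A hA B hB hAB
end

section
/- Let k be an algebraically closed field and 2 ≤ d ≤ n − 3. Let t₁, …, t_n ∈ k be pairwise distinct, let λ₁, …, λ_n ∈ k be nonzero, and let A ∈ k^{(d+1)×n} be the matrix with entries A_{j,i} = λ_i·t_i^j for 0 ≤ j ≤ d (so the columns of A are nonzero multiples of points on the rational normal curve of degree d). Let B ∈ k^{(n−d−1)×n} be an affine Gale transform of A (rank B = n − d − 1 and A·Bᵀ = 0). Then there exist an invertible matrix g ∈ k^{(n−d−1)×(n−d−1)} and nonzero scalars μ₁, …, μ_n ∈ k such that (g·B)_{j,i} = μ_i·t_i^j for all 0 ≤ j ≤ n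 − d − 2 and all i. In other words, every Gale transform of a configuration of distinct points on a rational normal curve of degree d in ℙ^d is a configuration of distinct points on a rational normal curve of degree n − d − 2 in ℙ^{n−d−2}. -/
/-!
Put `w i = ∏_{l ≠ i} (t i - t l)⁻¹`. Comparing top coefficients in the Lagrange interpolation
of `X ^ r` at the nodes `t` gives `∑ i, w i * t i ^ r = 0` for `r ≤ n - 2`, so the rows
`i ↦ (w i / lam i) * t i ^ j`, `j < n - d - 1`, are orthogonal to the rows of `A`. These rows
are linearly independent (Vandermonde), and `ker A` has dimension `n - d - 1 = rank B`, so they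
span `ker A`, which is also the row space of `B`; the change of basis between the two is `g`.
-/

open Finset Polynomial Matrix

theorem Lagrange.sum_pow_mul_nodalWeight_eq_zero {F ι : Type*} [Field F] [DecidableEq ι]
    {s : Finset ι} {v : ι → F} (hvs : Set.InjOn v s) {r : ℕ} (hr : r + 1 < #s) :
    ∑ i ∈ s, v i ^ r * nodalWeight s v i = 0 := by
  have hdeg : (X ^ r : F[X]).degree < #s := by
    rw [degree_X_pow]
    exact_mod_cast (by omega : r < #s)
  have h := Lagrange.coeff_eq_sum hvs hdeg
  rw [coeff_X_pow, if_neg (by omega)] at h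
  simpa [nodalWeight, prod_inv_distrib, div_eq_mul_inv] using h.symm

namespace Matrix

variable {F ι : Type*} [Field F] [Fintype ι]

def rationalNormalCurve (p : ℕ) (w t : ι → F) : Matrix (Fin p) ι F :=
  of fun j i => w i * t i ^ (j : ℕ)

theorem linearIndependent_rationalNormalCurve {p : ℕ} (hp : p ≤ Fintype.card ι)
    {w t : ι → F} (hw : ∀ i, w i ≠ 0) (ht : Function.Injective t) :
    LinearIndependent F (rationalNormalCurve p w t).row := by
  refine Fintype.linearIndependent_iff.mpr fun c hc => congrFun ?_
  let e : Fin p ↪ ι := (Fin.castLEEmb hp).trans (Fintype.equivFin ι).symm.toEmbedding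
  refine eq_zero_of_forall_index_sum_mul_pow_eq_zero (f := t ∘ e) (ht.comp e.injective)
    fun i => ?_
  have hci := congrFun hc (e i)
  simp only [Finset.sum_apply, Pi.smul_apply, smul_eq_mul, Pi.zero_apply, row,
    rationalNormalCurve, of_apply] at hci
  refine (mul_eq_zero.mp ?_).resolve_left (hw (e i))
  rw [Finset.mul_sum, ← hci]
  exact Finset.sum_congr rfl fun j _ => by simp only [Function.comp_apply]; ring

theorem rank_rationalNormalCurve {p : ℕ} (hp : p ≤ Fintype.card ι) {w t : ι → F}
    (hw : ∀ i, w i ≠ 0) (ht : Function.Injective t) :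
    (rationalNormalCurve p w t).rank = p := by
  simpa using (linearIndependent_rationalNormalCurve hp hw ht).rank_matrix

theorem rationalNormalCurve_mul_transpose_eq_zero [DecidableEq ι] {p q : ℕ}
    (hpq : p + q ≤ Fintype.card ι) {w w' t : ι → F} (ht : Function.Injective t)
    (hww' : ∀ i, w i * w' i = Lagrange.nodalWeight univ t i) :
    rationalNormalCurve p w t * (rationalNormalCurve q w' t)ᵀ = 0 := by
  ext a b
  have hab : (a + b : ℕ) + 1 < #(univ : Finset ι) := by rw [card_univ]; omega
  rw [mul_apply, zero_apply, ← Lagrange.sum_pow_mul_nodalWeight_eq_zero ht.injOn hab]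
  refine Finset.sum_congr rfl fun i _ => ?_
  simp only [transpose_apply, rationalNormalCurve, of_apply, ← hww']
  ring

variable {k l m n : Type*} [Field k] [Fintype m] [Fintype n]

omit [Fintype m] in
theorem mulVec_row_eq_zero_of_mul_transpose_eq_zero {A : Matrix l n k} {B : Matrix m n k}
    (hAB : A * Bᵀ = 0) (j : m) : A *ᵥ B.row j = 0 := by
  funext a
  simpa [mul_apply, mulVec, dotProduct, row] using congrFun (congrFun hAB a) j

theorem span_row_eq_ker_mulVecLin {A : Matrix l n k} {B : Matrix m n k} (hAB : A * Bᵀ = 0)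
    (hrank : A.rank + B.rank = Fintype.card n) :
    Submodule.span k (Set.range B.row) = LinearMap.ker A.mulVecLin := by
  refine Submodule.eq_of_le_of_finrank_le (Submodule.span_le.mpr
    (Set.range_subset_iff.mpr (mulVec_row_eq_zero_of_mul_transpose_eq_zero hAB))) ?_
  have hrank_nullity := LinearMap.finrank_range_add_finrank_ker A.mulVecLin
  rw [Module.finrank_fintype_fun_eq_card] at hrank_nullity
  have hA_rank : A.rank = Module.finrank k (LinearMap.range A.mulVecLin) := rfl
  rw [← rank_eq_finrank_span_row]
  omega

theorem exists_isUnit_mul_eq_of_row_mem_span [DecidableEq m] {B C : Matrix m n k}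
    (hC : C.rank = Fintype.card m) (hCB : ∀ j, C.row j ∈ Submodule.span k (Set.range B.row)) :
    ∃ g : Matrix m m k, IsUnit g ∧ g * B = C := by
  choose g hg using fun j => (Submodule.mem_span_range_iff_exists_fun k).mp (hCB j)
  have hgB : of g * B = C := by
    ext j i
    simpa [mul_apply, Finset.sum_apply, row, mul_comm] using congrFun (hg j) i
  have hg_rank : (of g).rank = Fintype.card m :=
    le_antisymm (rank_le_card_width _) (hC ▸ hgB ▸ rank_mul_le_left _ _)
  refine ⟨of g, ?_, hgB⟩
  rw [← mulVec_surjective_iff_isUnit, ← coe_mulVecLin, ← LinearMap.range_eq_top]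
  exact Submodule.eq_top_of_finrank_eq (by rwa [Module.finrank_fintype_fun_eq_card])

end Matrix

theorem gale_of_rationalNormalCurve_general {k : Type*} [Field k] {d n : ℕ}
    (hn : d + 3 ≤ n)
    (t : Fin n → k) (ht : Function.Injective t)
    (lam : Fin n → k) (hlam : ∀ i, lam i ≠ 0)
    (A : Matrix (Fin (d + 1)) (Fin n) k)
    (hA : ∀ (j : Fin (d + 1)) (i : Fin n), A j i = lam i * t i ^ (j : ℕ))
    (B : Matrix (Fin (n - d - 1)) (Fin n) k)
    (hB : B.rank = n - d - 1) (hAB : A * B.transpose = 0) :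
    ∃ (g : Matrix (Fin (n - d - 1)) (Fin (n - d - 1)) k) (_ : IsUnit g)
      (mu : Fin n → k), (∀ i, mu i ≠ 0) ∧
        ∀ (j : Fin (n - d - 1)) (i : Fin n), (g * B) j i = mu i * t i ^ (j : ℕ) := by
  classical
  set mu : Fin n → k := fun i => Lagrange.nodalWeight univ t i / lam i
  have hmu : ∀ i, mu i ≠ 0 := fun i =>
    div_ne_zero (Lagrange.nodalWeight_ne_zero ht.injOn (mem_univ i)) (hlam i)
  have hA_eq : A = rationalNormalCurve (d + 1) lam t := ext hA
  have hA_rank : A.rank = d + 1 := by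
    rw [hA_eq, rank_rationalNormalCurve (by rw [Fintype.card_fin]; omega) hlam ht]
  have hrow_span :=
    span_row_eq_ker_mulVecLin hAB (by rw [hA_rank, hB, Fintype.card_fin]; omega)
  have hAC : A * (rationalNormalCurve (n - d - 1) mu t)ᵀ = 0 := by
    rw [hA_eq]
    exact rationalNormalCurve_mul_transpose_eq_zero (by rw [Fintype.card_fin]; omega) ht
      fun i => mul_div_cancel₀ _ (hlam i)
  have hC_rank :
      (rationalNormalCurve (n - d - 1) mu t).rank = Fintype.card (Fin (n - d - 1)) := by
    rw [rank_rationalNormalCurve (by rw [Fintype.card_fin]; omega) hmu ht, Fintype.card_fin]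
  obtain ⟨g, hg, hgB⟩ := exists_isUnit_mul_eq_of_row_mem_span (B := B) hC_rank fun j => by
    rw [hrow_span]
    exact mulVec_row_eq_zero_of_mul_transpose_eq_zero hAC j
  exact ⟨g, hg, mu, hmu, fun j i => by rw [hgB]; rfl⟩

/-- Goppa's theorem (Proposition 4.12), at the level of matrices: every affine Gale
transform of a configuration of distinct points on the rational normal curve of
degree `d` in `ℙ^d` is (up to `GL_{n−d−1}`) a configuration of distinct points on
the rational normal curve of degree `n − d − 2` in `ℙ^{n−d−2}`. -/
theorem gale_of_rationalNormalCurve {k : Type*} [Field k] [IsAlgClosed k] {d n : ℕ}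
    (hd : 2 ≤ d) (hn : d + 3 ≤ n)
    (t : Fin n → k) (ht : Function.Injective t)
    (lam : Fin n → k) (hlam : ∀ i, lam i ≠ 0)
    (A : Matrix (Fin (d + 1)) (Fin n) k)
    (hA : ∀ (j : Fin (d + 1)) (i : Fin n), A j i = lam i * t i ^ (j : ℕ))
    (B : Matrix (Fin (n - d - 1)) (Fin n) k)
    (hB : B.rank = n - d - 1) (hAB : A * B.transpose = 0) :
    ∃ (g : Matrix (Fin (n - d - 1)) (Fin (n - d - 1)) k) (_ : IsUnit g)
      (mu : Fin n → k), (∀ i, mu i ≠ 0) ∧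
        ∀ (j : Fin (n - d - 1)) (i : Fin n), (g * B) j i = mu i * t i ^ (j : ℕ) :=
  gale_of_rationalNormalCurve_general hn t ht lam hlam A hA B hB hAB
end

section
/- Let R be a commutative ring, let d ≥ 2, and let t₁, …, t_{d+4}, λ₁, …, λ_{d+4} ∈ R. Let A be the (d+1)×(d+4) matrix with entries A_{j,i} = λ_i·t_i^j for 0 ≤ j ≤ d. Then for every 6-element subset {a < b < c < d' < e < f} of [d+4], the following identity of maximal (d+1)×(d+1) minors of A holds, where complements are taken inside [d+4]: m_{{a,b,c}^c}(A)·m_{{a,d',e}^c}(A)·m_{{b,d',f}^c}(A)·m_{{c,e,f}^c}(A) = m_{{a,b,d'}^c}(A)·m_{{a,c,e}^c}(A)·m_{{b,c,f}^c}(A)·m_{{d',e,f}^c}(A). -/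
/-- The maximal minor `m_{{x,y,z}^c}(A)` of a `(d+1)×(d+4)` matrix `A`: the
determinant of the `(d+1)×(d+1)` submatrix of `A` whose columns are those indexed by
the complement of `{x, y, z}` in `[d+4]`, taken in increasing order. -/
noncomputable def minorCompl {R : Type*} [CommRing R] {d : ℕ}
    (A : Matrix (Fin (d + 1)) (Fin (d + 4)) R) (x y z : Fin (d + 4))
    (hxy : x ≠ y) (hxz : x ≠ z) (hyz : y ≠ z) : R :=
  Matrix.det (Matrix.of fun r j =>
    A r ((({x, y, z} : Finset (Fin (d + 4)))ᶜ).orderEmbOfFin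
      (by
        rw [Finset.card_compl,
          Finset.card_insert_of_notMem (by simp [hxy, hxz]),
          Finset.card_insert_of_notMem (by simp [hyz]),
          Finset.card_singleton, Fintype.card_fin]
        omega) j))

/-!
On the rational normal curve every maximal minor is explicit: the minor on a column set `S` is
`∏_{i ∈ S} λᵢ · ∏_{i < j in S} (tⱼ - tᵢ)`. Hence each side of the identity is a product of the
factors `λᵢ` and `tⱼ - tᵢ`, the factor of a pair `{i, j}` occurring once for every complement
`{x, y, z}ᶜ` containing both `i` and `j`. The two families of triples of `φ` avoid every set of
at most two of the six points equally often, so both sides have the same factors with the same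
multiplicities.
-/

open Finset

section Multiplicity

variable {α ι M : Type*} [Fintype α] [DecidableEq α] [Fintype ι] [CommMonoid M]

theorem prod_prod_eq_prod_pow_card (S : ι → Finset α) (f : α → M) :
    ∏ k, ∏ x ∈ S k, f x = ∏ x, f x ^ #{k | x ∈ S k} := by
  calc ∏ k, ∏ x ∈ S k, f x = ∏ k, ∏ x, if x ∈ S k then f x else 1 := by
        simp only [prod_ite_mem, univ_inter]
    _ = ∏ x, ∏ k, if x ∈ S k then f x else 1 := prod_comm
    _ = ∏ x, f x ^ #{k | x ∈ S k} := by simp only [← prod_filter, prod_const]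

theorem prod_prod_congr_of_card_eq {S S' : ι → Finset α}
    (h : ∀ x, #{k | x ∈ S k} = #{k | x ∈ S' k}) (f : α → M) :
    ∏ k, ∏ x ∈ S k, f x = ∏ k, ∏ x ∈ S' k, f x := by
  simp only [prod_prod_eq_prod_pow_card, h]

theorem card_mem_compl_map_eq_card_disjoint_preimage {β : Type*} [DecidableEq β]
    (p : β ↪ α) (T : ι → Finset β) (i j : α) :
    #{k | i ∈ ((T k).map p)ᶜ ∧ j ∈ ((T k).map p)ᶜ} =
      #{k | Disjoint (T k) (({i, j} : Finset α).preimage p p.injective.injOn)} := by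
  congr 1
  ext k
  simp only [mem_filter, mem_univ, true_and, mem_compl, mem_map, not_exists, not_and,
    disjoint_left, mem_preimage, mem_insert, mem_singleton, not_or, forall₂_and]

end Multiplicity

section RationalNormalCurve

variable {α R : Type*} [LinearOrder α] [CommRing R]

def rncMinor (t lam : α → R) (S : Finset α) : R :=
  (∏ i ∈ S, lam i) * ∏ q ∈ S ×ˢ S, if q.1 < q.2 then t q.2 - t q.1 else 1

theorem prod_Ioi_orderEmbOfFin {n : ℕ} (S : Finset α) (hS : #S = n) (F : α → α → R) :
    ∏ i : Fin n, ∏ j ∈ Ioi i, F (S.orderEmbOfFin hS i) (S.orderEmbOfFin hS j) =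
      ∏ q ∈ S ×ˢ S, if q.1 < q.2 then F q.1 q.2 else 1 := by
  conv_rhs => rw [prod_product, ← S.map_orderEmbOfFin_univ hS]
  simp only [prod_map, RelEmbedding.coe_toEmbedding, OrderEmbedding.lt_iff_lt,
    ← filter_lt_eq_Ioi, prod_filter]

theorem det_columns_eq_rncMinor {n : ℕ} {t lam : α → R} {A : Matrix (Fin n) α R}
    (hA : ∀ (j : Fin n) (i : α), A j i = lam i * t i ^ (j : ℕ)) (S : Finset α) (hS : #S = n) :
    (Matrix.of fun r j => A r (S.orderEmbOfFin hS j)).det = rncMinor t lam S := by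
  have hcols : (Matrix.of fun r j => A r (S.orderEmbOfFin hS j)) = Matrix.of fun r j =>
      lam (S.orderEmbOfFin hS j) *
        (Matrix.vandermonde fun i => t (S.orderEmbOfFin hS i)).transpose r j := by
    ext r j
    simp [hA, Matrix.vandermonde]
  rw [hcols, Matrix.det_mul_row, Matrix.det_transpose, Matrix.det_vandermonde,
    prod_Ioi_orderEmbOfFin S hS fun a b => t b - t a, rncMinor]
  congr 1
  conv_rhs => rw [← S.map_orderEmbOfFin_univ hS, prod_map]
  rfl

theorem prod_rncMinor_congr [Fintype α] {ι : Type*} [Fintype ι] (t lam : α → R)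
    {S S' : ι → Finset α} (h : ∀ i j, #{k | i ∈ S k ∧ j ∈ S k} = #{k | i ∈ S' k ∧ j ∈ S' k}) :
    ∏ k, rncMinor t lam (S k) = ∏ k, rncMinor t lam (S' k) := by
  simp only [rncMinor, prod_mul_distrib]
  congr 1
  · exact prod_prod_congr_of_card_eq (fun i => by simpa using h i i) lam
  · exact prod_prod_congr_of_card_eq (fun q => by simpa [mem_product] using h q.1 q.2) _

theorem prod_rncMinor_compl_map_congr [Fintype α] {β ι : Type*} [DecidableEq β] [Fintype ι]
    (t lam : α → R) (p : β ↪ α) {T T' : ι → Finset β}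
    (h : ∀ W : Finset β, #W ≤ 2 → #{k | Disjoint (T k) W} = #{k | Disjoint (T' k) W}) :
    ∏ k, rncMinor t lam ((T k).map p)ᶜ = ∏ k, rncMinor t lam ((T' k).map p)ᶜ := by
  refine prod_rncMinor_congr t lam fun i j => ?_
  simp only [card_mem_compl_map_eq_card_disjoint_preimage]
  exact h _ ((card_le_card_of_injOn p (fun _ hx => mem_preimage.mp hx)
    p.injective.injOn).trans card_le_two)

end RationalNormalCurve

/-- The index triples of the brackets `[abc][ade][bdf][cef]` and `[abd][ace][bcf][def]` of the
conic equation `φ`, with `a, …, f` numbered `0, …, 5`. -/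
def conicTriplesLeft : Fin 4 → Finset (Fin 6) := ![{0, 1, 2}, {0, 3, 4}, {1, 3, 5}, {2, 4, 5}]

def conicTriplesRight : Fin 4 → Finset (Fin 6) := ![{0, 1, 3}, {0, 2, 4}, {1, 2, 5}, {3, 4, 5}]

theorem card_disjoint_conicTriplesLeft_eq (W : Finset (Fin 6)) (hW : #W ≤ 2) :
    #{k | Disjoint (conicTriplesLeft k) W} = #{k | Disjoint (conicTriplesRight k) W} := by
  revert W
  decide

/-- Lemma 4.17, made explicit: for a matrix `A` whose columns are scalar multiples
`λᵢ·(1, tᵢ, …, tᵢ^d)` of points of the rational normal curve of degree `d`, and any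
six indices `a < b < c < d' < e < f` in `[d+4]` (here `a = p 0, …, f = p 5`), the
Gale-transformed conic equation holds:
`m_{{a,b,c}^c}·m_{{a,d',e}^c}·m_{{b,d',f}^c}·m_{{c,e,f}^c}
  = m_{{a,b,d'}^c}·m_{{a,c,e}^c}·m_{{b,c,f}^c}·m_{{d',e,f}^c}`. -/
theorem psi_vanishes_on_rationalNormalCurve {R : Type*} [CommRing R] {d : ℕ}
    (t lam : Fin (d + 4) → R)
    (A : Matrix (Fin (d + 1)) (Fin (d + 4)) R)
    (hA : ∀ (j : Fin (d + 1)) (i : Fin (d + 4)), A j i = lam i * t i ^ (j : ℕ))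
    (p : Fin 6 → Fin (d + 4)) (hp : StrictMono p) :
    minorCompl A (p 0) (p 1) (p 2)
        (hp.injective.ne (by decide)) (hp.injective.ne (by decide))
        (hp.injective.ne (by decide)) *
      minorCompl A (p 0) (p 3) (p 4)
        (hp.injective.ne (by decide)) (hp.injective.ne (by decide))
        (hp.injective.ne (by decide)) *
      minorCompl A (p 1) (p 3) (p 5)
        (hp.injective.ne (by decide)) (hp.injective.ne (by decide))
        (hp.injective.ne (by decide)) *
      minorCompl A (p 2) (p 4) (p 5)
        (hp.injective.ne (by decide)) (hp.injective.ne (by decide))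
        (hp.injective.ne (by decide)) =
    minorCompl A (p 0) (p 1) (p 3)
        (hp.injective.ne (by decide)) (hp.injective.ne (by decide))
        (hp.injective.ne (by decide)) *
      minorCompl A (p 0) (p 2) (p 4)
        (hp.injective.ne (by decide)) (hp.injective.ne (by decide))
        (hp.injective.ne (by decide)) *
      minorCompl A (p 1) (p 2) (p 5)
        (hp.injective.ne (by decide)) (hp.injective.ne (by decide))
        (hp.injective.ne (by decide)) *
      minorCompl A (p 3) (p 4) (p 5)
        (hp.injective.ne (by decide)) (hp.injective.ne (by decide))
        (hp.injective.ne (by decide)) := by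
  have key := prod_rncMinor_compl_map_congr t lam (OrderEmbedding.ofStrictMono p hp).toEmbedding
    card_disjoint_conicTriplesLeft_eq
  simp only [minorCompl, det_columns_eq_rncMinor hA]
  simpa [Fin.prod_univ_four, conicTriplesLeft, conicTriplesRight, map_insert, map_singleton]
    using key
end
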